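/- Let G be a network with request R and extended graph G_ext. Let x : S → {0,1} and f : E_ext → ℕ satisfy (IP-1) f(δ⁺_{E_ext}(v)) = f(δ⁻_{E_ext}(v)) for all v ∈ V_G, (IP-2) f(δ⁺_{E_R}(W)) ≥ x_s for all W ⊆ V_G and s ∈ W∩S, (IP-5) f(s,o⁻_S) ≤ u_S(s)·x_s for all s ∈ S, and (IP-8) f(o⁺,t) = 1 for all t ∈ T. Then the directed Steiner cuts hold: f(δ⁺_{E_R}(W)) ≥ 1 for every W ⊆ V_G with W∩T ≠ ∅. In other words, the directed Steiner cut inequalities (IP-3) are valid inequalities implied by the remaining constraints. -/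

import Mathlib

/-! Formalization of the Constrained Virtual Steiner Arborescence Problem (CVSAP),
its single-commodity flow IP formulation, and related notions. -/

/-- Vertices of the extended graph: original vertices plus super source `src`,
super sink `sinkS` for Steiner nodes and super sink `sinkR` for the root. -/
inductive ExtV (V : Type) where
  | orig : V → ExtV V
  | src : ExtV V
  | sinkS : ExtV V
  | sinkR : ExtV V
deriving DecidableEq

open ExtV

/-- A (finite) capacitated directed network. -/
structure Network (V : Type) [DecidableEq V] where
  E : Finset (V × V)
  uE : V × V → ℕ
  cE : V × V → ℝ

/-- A request `R = (root, S, T, u_r, c_S, u_S)`. -/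
structure Request (V : Type) [DecidableEq V] where
  root : V
  S : Finset V
  T : Finset V
  ur : ℕ
  cS : V → ℝ
  uS : V → ℕ

variable {V : Type} [DecidableEq V]

/-- Well-formedness: root is neither terminal nor Steiner site, Steiner sites and terminals
are disjoint, and all costs are positive. -/
def RequestWF (N : Network V) (R : Request V) : Prop :=
  R.root ∉ R.T ∧ R.root ∉ R.S ∧ Disjoint R.S R.T ∧
    (∀ s ∈ R.S, 0 < R.cS s) ∧ (∀ e ∈ N.E, 0 < N.cE e)

/-- Edge set of the extended graph `G_ext`. -/
def Eext (N : Network V) (R : Request V) : Finset (ExtV V × ExtV V) :=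
  (N.E.image fun e => (orig e.1, orig e.2)) ∪
    ({(orig R.root, sinkR)} : Finset (ExtV V × ExtV V)) ∪
    (R.S.image fun s => (orig s, sinkS)) ∪
    (R.S.image fun s => (src, orig s)) ∪
    (R.T.image fun t => (src, orig t))

/-- `E_R`: the extended edges without the edges into the Steiner super sink. -/
def ERext (N : Network V) (R : Request V) : Finset (ExtV V × ExtV V) :=
  (Eext N R).filter fun e => e.2 ≠ sinkS

/-- Edges of `F` leaving node `v`. -/
def outV (F : Finset (ExtV V × ExtV V)) (v : ExtV V) : Finset (ExtV V × ExtV V) :=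
  F.filter fun e => e.1 = v

/-- Edges of `F` entering node `v`. -/
def inV (F : Finset (ExtV V × ExtV V)) (v : ExtV V) : Finset (ExtV V × ExtV V) :=
  F.filter fun e => e.2 = v

/-- Edges of `F` leaving the node set `W`. -/
def outSet (F : Finset (ExtV V × ExtV V)) (W : Finset (ExtV V)) : Finset (ExtV V × ExtV V) :=
  F.filter fun e => e.1 ∈ W ∧ e.2 ∉ W

/-- Total flow of `f` on the edge set `F`. -/
def fSum (f : ExtV V × ExtV V → ℕ) (F : Finset (ExtV V × ExtV V)) : ℕ :=
  ∑ e ∈ F, f e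

/-- Embedding of a set of original nodes into the extended graph. -/
def extW (W : Finset V) : Finset (ExtV V) := W.image orig

/-- A walk in the support graph `G^f_ext`: consecutive nodes are joined by extended
edges carrying positive flow. -/
def IsSupportWalk (N : Network V) (R : Request V) (f : ExtV V × ExtV V → ℕ)
    (p : List (ExtV V)) : Prop :=
  p.Chain' fun a b => (a, b) ∈ Eext N R ∧ 1 ≤ f (a, b)

/-- (IP-1): flow conservation at all original nodes. -/
def IP1 (N : Network V) (R : Request V) (f : ExtV V × ExtV V → ℕ) : Prop :=
  ∀ v : V, fSum f (outV (Eext N R) (orig v)) = fSum f (inV (Eext N R) (orig v))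

/-- (IP-2): connectivity inequalities for activated Steiner sites. -/
def IP2 (N : Network V) (R : Request V) (x : V → ℕ) (f : ExtV V × ExtV V → ℕ) : Prop :=
  ∀ W : Finset V, ∀ s ∈ W, s ∈ R.S → x s ≤ fSum f (outSet (ERext N R) (extW W))

/-- (IP-3): directed Steiner cuts for terminals. -/
def IP3 (N : Network V) (R : Request V) (f : ExtV V × ExtV V → ℕ) : Prop :=
  ∀ W : Finset V, (W ∩ R.T).Nonempty → 1 ≤ fSum f (outSet (ERext N R) (extW W))

/-- Feasibility for the integer program IP-A-CVSAP. -/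
def IPFeasible (N : Network V) (R : Request V) (x : V → ℕ) (f : ExtV V × ExtV V → ℕ) : Prop :=
  (∀ s ∈ R.S, x s ≤ 1) ∧
  IP1 N R f ∧
  IP2 N R x f ∧
  IP3 N R f ∧
  (∀ s ∈ R.S, x s ≤ f (orig s, sinkS)) ∧
  (∀ s ∈ R.S, f (orig s, sinkS) ≤ R.uS s * x s) ∧
  f (orig R.root, sinkR) ≤ R.ur ∧
  (∀ e ∈ N.E, f (orig e.1, orig e.2) ≤ N.uE e) ∧
  (∀ t ∈ R.T, f (src, orig t) = 1) ∧
  (∀ s ∈ R.S, f (src, orig s) = x s)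

/-- Objective value of IP-A-CVSAP. -/
noncomputable def costIP (N : Network V) (R : Request V) (x : V → ℕ)
    (f : ExtV V × ExtV V → ℕ) : ℝ :=
  ∑ e ∈ N.E, N.cE e * f (orig e.1, orig e.2) + ∑ s ∈ R.S, R.cS s * x s

/-- A Virtual Arborescence: nodes, virtual edges and the mapping of virtual edges
onto paths in the underlying graph. -/
structure VirtArb (V : Type) where
  VT : Finset V
  ET : Finset (V × V)
  pi : V × V → List V

/-- `p` is a simple directed path in `N` from `u` to `v`. -/
def IsPathInG (N : Network V) (p : List V) (u v : V) : Prop :=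
  p.Chain' (fun a b => (a, b) ∈ N.E) ∧ p.head? = some u ∧ p.getLast? = some v ∧ p.Nodup

/-- The virtual edges whose path uses the edge `e` of the underlying graph. -/
def pathUses (TA : VirtArb V) (e : V × V) : Finset (V × V) :=
  TA.ET.filter fun d => e ∈ (TA.pi d).zip (TA.pi d).tail

/-- `|π(E_T)[e]|`: the number of paths of the virtual arborescence using edge `e`. -/
def pathCount (TA : VirtArb V) (e : V × V) : ℕ := (pathUses TA e).card

/-- Total degree of node `v` with respect to the virtual edge set `ET`. -/
def degTotal (ET : Finset (V × V)) (v : V) : ℕ :=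
  (ET.filter fun e => e.1 = v).card + (ET.filter fun e => e.2 = v).card

/-- `(VT, ET, r)` is an arborescence rooted at `r` with all edges oriented towards `r`. -/
def ArborTowards (VT : Finset V) (ET : Finset (V × V)) (r : V) : Prop :=
  (∀ e ∈ ET, e.1 ∈ VT ∧ e.2 ∈ VT ∧ e.1 ≠ e.2) ∧
  (∀ v ∈ VT, v ≠ r → (ET.filter fun e => e.1 = v).card = 1) ∧
  (∀ e ∈ ET, e.1 ≠ r) ∧
  (∀ v ∈ VT, ∃ p : List V, p.Chain' (fun a b => (a, b) ∈ ET) ∧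
      p.head? = some v ∧ p.getLast? = some r)

/-- `(VT, ET, r)` is an arborescence rooted at `r` with all edges oriented away from `r`. -/
def ArborAway (VT : Finset V) (ET : Finset (V × V)) (r : V) : Prop :=
  (∀ e ∈ ET, e.1 ∈ VT ∧ e.2 ∈ VT ∧ e.1 ≠ e.2) ∧
  (∀ v ∈ VT, v ≠ r → (ET.filter fun e => e.2 = v).card = 1) ∧
  (∀ e ∈ ET, e.2 ≠ r) ∧
  (∀ v ∈ VT, ∃ p : List V, p.Chain' (fun a b => (a, b) ∈ ET) ∧
      p.head? = some r ∧ p.getLast? = some v)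

/-- Feasible solutions of A-CVSAP: all arborescence edges oriented towards the root. -/
def FeasibleACVSAP (N : Network V) (R : Request V) (TA : VirtArb V) : Prop :=
  R.root ∈ TA.VT ∧
  ArborTowards TA.VT TA.ET R.root ∧
  (∀ d ∈ TA.ET, IsPathInG N (TA.pi d) d.1 d.2) ∧
  R.T ⊆ TA.VT ∧
  TA.VT ⊆ insert R.root (R.S ∪ R.T) ∧
  (∀ t ∈ R.T, degTotal TA.ET t = 1) ∧
  degTotal TA.ET R.root ≤ R.ur ∧
  (∀ s ∈ R.S, s ∈ TA.VT → degTotal TA.ET s ≤ R.uS s + 1) ∧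
  (∀ e ∈ N.E, pathCount TA e ≤ N.uE e)

/-- Feasible solutions of M-CVSAP: all arborescence edges oriented away from the root. -/
def FeasibleMCVSAP (N : Network V) (R : Request V) (TA : VirtArb V) : Prop :=
  R.root ∈ TA.VT ∧
  ArborAway TA.VT TA.ET R.root ∧
  (∀ d ∈ TA.ET, IsPathInG N (TA.pi d) d.1 d.2) ∧
  R.T ⊆ TA.VT ∧
  TA.VT ⊆ insert R.root (R.S ∪ R.T) ∧
  (∀ t ∈ R.T, degTotal TA.ET t = 1) ∧
  degTotal TA.ET R.root ≤ R.ur ∧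
  (∀ s ∈ R.S, s ∈ TA.VT → degTotal TA.ET s ≤ R.uS s + 1) ∧
  (∀ e ∈ N.E, pathCount TA e ≤ N.uE e)

/-- Cost of a virtual arborescence. -/
noncomputable def costCVSAP (N : Network V) (R : Request V) (TA : VirtArb V) : ℝ :=
  ∑ e ∈ N.E, N.cE e * pathCount TA e + ∑ s ∈ R.S.filter (· ∈ TA.VT), R.cS s

/-! Summing conservation over the original nodes of `W` shows that the flow leaving `W` in
`G_ext` equals the flow entering it, and the entering flow is at least `f(o⁺, t) = 1` for a
terminal `t ∈ W`. If the `E_R`-cut of `W` carried no flow, (IP-2) would force `x_s = 0` for every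
Steiner site `s ∈ W`, so by (IP-5) no flow would leave `W` towards `o⁻_S` either: all flow
leaving `W` in `G_ext` would vanish. -/

def inSet (F : Finset (ExtV V × ExtV V)) (W : Finset (ExtV V)) : Finset (ExtV V × ExtV V) :=
  F.filter fun e => e.1 ∉ W ∧ e.2 ∈ W

section Cuts

variable (f : ExtV V × ExtV V → ℕ) (F : Finset (ExtV V × ExtV V)) (W : Finset (ExtV V))

lemma sum_fSum_outV :
    ∑ v ∈ W, fSum f (outV F v) = fSum f (F.filter fun e => e.1 ∈ W) :=
  Finset.sum_fiberwise_eq_sum_filter F W Prod.fst f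

lemma sum_fSum_inV :
    ∑ v ∈ W, fSum f (inV F v) = fSum f (F.filter fun e => e.2 ∈ W) :=
  Finset.sum_fiberwise_eq_sum_filter F W Prod.snd f

/-- Both sides are the flow on the edges with at least one end in `W`. -/
lemma fSum_filter_fst_mem_add_fSum_inSet :
    fSum f (F.filter fun e => e.1 ∈ W) + fSum f (inSet F W) =
      fSum f (F.filter fun e => e.1 ∈ W ∨ e.2 ∈ W) := by
  rw [fSum, fSum, fSum, ← Finset.sum_filter_add_sum_filter_not
    (F.filter fun e => e.1 ∈ W ∨ e.2 ∈ W) (fun e => e.1 ∈ W), Finset.filter_filter,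
    Finset.filter_filter, inSet]
  congr 2 <;> ext e <;> simp only [Finset.mem_filter] <;> tauto

lemma fSum_filter_snd_mem_add_fSum_outSet :
    fSum f (F.filter fun e => e.2 ∈ W) + fSum f (outSet F W) =
      fSum f (F.filter fun e => e.1 ∈ W ∨ e.2 ∈ W) := by
  rw [fSum, fSum, fSum, ← Finset.sum_filter_add_sum_filter_not
    (F.filter fun e => e.1 ∈ W ∨ e.2 ∈ W) (fun e => e.2 ∈ W), Finset.filter_filter,
    Finset.filter_filter, outSet]
  congr 2 <;> ext e <;> simp only [Finset.mem_filter] <;> tauto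

lemma fSum_outSet_eq_fSum_inSet_of_conservation
    (hcons : ∀ v ∈ W, fSum f (outV F v) = fSum f (inV F v)) :
    fSum f (outSet F W) = fSum f (inSet F W) := by
  have hsum : ∑ v ∈ W, fSum f (outV F v) = ∑ v ∈ W, fSum f (inV F v) :=
    Finset.sum_congr rfl hcons
  have hout := fSum_filter_fst_mem_add_fSum_inSet f F W
  have hin := fSum_filter_snd_mem_add_fSum_outSet f F W
  rw [sum_fSum_outV, sum_fSum_inV] at hsum
  omega

lemma fSum_outSet_filter_add_filter_not (p : ExtV V × ExtV V → Prop) [DecidablePred p] :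
    fSum f (outSet (F.filter p) W) + fSum f (outSet (F.filter fun e => ¬p e) W) =
      fSum f (outSet F W) := by
  rw [fSum, fSum, fSum, outSet, outSet, Finset.filter_comm, Finset.filter_comm (fun e => ¬p e)]
  exact Finset.sum_filter_add_sum_filter_not _ p f

end Cuts

lemma src_not_mem_extW (W : Finset V) : (src : ExtV V) ∉ extW W := by
  simp [extW]

lemma orig_mem_extW {W : Finset V} {v : V} : orig v ∈ extW W ↔ v ∈ W := by
  simp [extW]

lemma src_orig_mem_Eext (N : Network V) (R : Request V) {t : V} (ht : t ∈ R.T) :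
    (src, orig t) ∈ Eext N R := by
  simp only [Eext, Finset.mem_union, Finset.mem_image]
  exact Or.inr ⟨t, ht, rfl⟩

lemma exists_eq_orig_sinkS_of_mem_Eext {N : Network V} {R : Request V}
    {e : ExtV V × ExtV V} (he : e ∈ Eext N R) (hsink : e.2 = sinkS) :
    ∃ s ∈ R.S, e = (orig s, sinkS) := by
  simp only [Eext, Finset.mem_union, Finset.mem_image, Finset.mem_singleton] at he
  rcases he with (((⟨a, -, rfl⟩ | rfl) | ⟨s, hs, rfl⟩) | ⟨s, -, rfl⟩) | ⟨t, -, rfl⟩ <;>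
    simp_all

lemma outSet_ERext (N : Network V) (R : Request V) (W : Finset (ExtV V)) :
    outSet (ERext N R) W = outSet ((Eext N R).filter fun e => ¬e.2 = sinkS) W := rfl

lemma fSum_outSet_sinkS_eq_zero (N : Network V) (R : Request V) (x : V → ℕ)
    (f : ExtV V × ExtV V → ℕ) (h5 : ∀ s ∈ R.S, f (orig s, sinkS) ≤ R.uS s * x s)
    (W : Finset V) (hx : ∀ s ∈ W, s ∈ R.S → x s = 0) :
    fSum f (outSet ((Eext N R).filter fun e => e.2 = sinkS) (extW W)) = 0 := by
  refine Finset.sum_eq_zero fun e he => ?_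
  simp only [outSet, Finset.mem_filter] at he
  obtain ⟨⟨heE, hsink⟩, hfst, -⟩ := he
  obtain ⟨s, hsS, rfl⟩ := exists_eq_orig_sinkS_of_mem_Eext heE hsink
  have := h5 s hsS
  rw [hx s (orig_mem_extW.mp hfst) hsS, Nat.mul_zero] at this
  omega

theorem steiner_cuts_valid_general (N : Network V) (R : Request V)
    (x : V → ℕ) (f : ExtV V × ExtV V → ℕ)
    (h1 : IP1 N R f) (h2 : IP2 N R x f)
    (h5 : ∀ s ∈ R.S, f (ExtV.orig s, ExtV.sinkS) ≤ R.uS s * x s)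
    (h8 : ∀ t ∈ R.T, f (ExtV.src, ExtV.orig t) = 1) :
    IP3 N R f := by
  intro W ⟨t, htW⟩
  rw [Finset.mem_inter] at htW
  by_contra! hcut
  have hx : ∀ s ∈ W, s ∈ R.S → x s = 0 := fun s hsW hsS => by
    have := h2 W s hsW hsS
    omega
  have hout : fSum f (outSet (Eext N R) (extW W)) = 0 := by
    rw [← fSum_outSet_filter_add_filter_not f _ _ (fun e => e.2 = sinkS),
      fSum_outSet_sinkS_eq_zero N R x f h5 W hx, ← outSet_ERext]
    omega
  have hin : 1 ≤ fSum f (inSet (Eext N R) (extW W)) := by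
    have hedge : (src, orig t) ∈ inSet (Eext N R) (extW W) :=
      Finset.mem_filter.mpr
        ⟨src_orig_mem_Eext N R htW.2, src_not_mem_extW W, orig_mem_extW.mpr htW.1⟩
    calc 1 = f (src, orig t) := (h8 t htW.2).symm
      _ ≤ _ := Finset.single_le_sum (fun _ _ => Nat.zero_le _) hedge
  have hcons : ∀ v ∈ extW W, fSum f (outV (Eext N R) v) = fSum f (inV (Eext N R) v) := by
    intro v hv
    obtain ⟨w, -, rfl⟩ := Finset.mem_image.mp hv
    exact h1 w
  have := fSum_outSet_eq_fSum_inSet_of_conservation f _ _ hcons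
  omega

theorem steiner_cuts_valid [Fintype V] (N : Network V) (R : Request V)
    (hWF : RequestWF N R) (x : V → ℕ) (f : ExtV V × ExtV V → ℕ)
    (hf0 : ∀ e ∉ Eext N R, f e = 0)
    (h1 : IP1 N R f) (h2 : IP2 N R x f)
    (h5 : ∀ s ∈ R.S, f (ExtV.orig s, ExtV.sinkS) ≤ R.uS s * x s)
    (h8 : ∀ t ∈ R.T, f (ExtV.src, ExtV.orig t) = 1) :
    IP3 N R f :=
  steiner_cuts_valid_general N R x f h1 h2 h5 h8
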